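/- Let k ≥ 2, n ≥ 1, n_k ≥ 1 be integers and n₁,…,n_{k−1} nonnegative integers. Let f be a non-constant polynomial over ℂ whose zeros all have multiplicity at least k. Then for any nonzero c ∈ ℂ, the polynomial f^n·(f')^{n₁}·…·(f^{(k)})^{n_k} − c has at least two distinct zeros. -/

import Mathlib

/-!
Put `F = f ^ n * ∏ (f^{(j)}) ^ {ν j}`. A root `z` of `f` has multiplicity at least `k ≥ 2`, so `z`
is a multiple root of `F`. If `F - c` had a single root `z₀`, it would equal `a (X - z₀) ^ m`, and
then `F' = m a (X - z₀) ^ (m - 1)` would vanish only at `z₀`. But `F'` vanishes at `z`, and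
`z ≠ z₀` because `F z = 0 ≠ c = F z₀`.
-/

open Polynomial

namespace Polynomial

theorem iterate_derivative_ne_zero {R : Type*} [Semiring R] [Module.IsTorsionFree ℕ R]
    {p : R[X]} (hp : p ≠ 0) {j : ℕ} (hj : j ≤ p.natDegree) : derivative^[j] p ≠ 0 := by
  intro h
  have hcoeff := congrArg (coeff · (p.natDegree - j)) h
  simp only [coeff_iterate_derivative, Nat.sub_add_cancel hj, coeff_zero] at hcoeff
  exact smul_ne_zero (Nat.descFactorial_eq_zero_iff_lt.not.2 hj.not_gt)
    (leadingCoeff_ne_zero.2 hp) hcoeff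

variable {K : Type*} [Field K] [IsAlgClosed K]

theorem eq_C_leadingCoeff_mul_X_sub_C_pow_of_forall_isRoot_eq {p : K[X]} {a : K}
    (h : ∀ x, p.IsRoot x → x = a) : p = C p.leadingCoeff * (X - C a) ^ p.natDegree := by
  have hroots : p.roots = Multiset.replicate p.natDegree a :=
    Multiset.eq_replicate.2 ⟨IsAlgClosed.card_roots_eq_natDegree,
      fun x hx => h x ((mem_roots' ..).1 hx).2⟩
  conv_lhs =>
    rw [← C_leadingCoeff_mul_prod_multiset_X_sub_C (p := p) IsAlgClosed.card_roots_eq_natDegree]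
  rw [hroots, Multiset.map_replicate, Multiset.prod_replicate]

variable [CharZero K]

theorem exists_ne_isRoot_sub_C_of_isRoot_derivative {p : K[X]} (hp : p.natDegree ≠ 0)
    {z c : K} (hz : p.derivative.IsRoot z) (hc : p.eval z ≠ c) :
    ∃ z₁ z₂, z₁ ≠ z₂ ∧ (p - C c).IsRoot z₁ ∧ (p - C c).IsRoot z₂ := by
  obtain ⟨z₀, hz₀⟩ := IsAlgClosed.eval_surjective hp c
  by_contra! hunique
  set q := p - C c
  have hq_root : q.IsRoot z₀ := by simp [q, hz₀]
  have hdeg : q.natDegree = p.natDegree := natDegree_sub_C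
  have hq_ne : q ≠ 0 := fun h0 => hp (by rw [← hdeg, h0, natDegree_zero])
  have hq : q = C q.leadingCoeff * (X - C z₀) ^ p.natDegree := by
    rw [← hdeg]
    exact eq_C_leadingCoeff_mul_X_sub_C_pow_of_forall_isRoot_eq fun x hx =>
      by_contra fun hne => hunique z₀ x (Ne.symm hne) hq_root hx
  have hderiv : derivative p =
      C q.leadingCoeff * (C (p.natDegree : K) * (X - C z₀) ^ (p.natDegree - 1)) := by
    rw [← derivative_X_sub_C_pow, ← derivative_C_mul, ← hq, derivative_sub, derivative_C,
      sub_zero]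
  have hzz₀ : z - z₀ ≠ 0 := sub_ne_zero.2 fun h => hc (h ▸ hz₀)
  rw [IsRoot, hderiv] at hz
  simp only [eval_mul, eval_C, eval_pow, eval_sub, eval_X] at hz
  exact mul_ne_zero (leadingCoeff_ne_zero.2 hq_ne)
    (mul_ne_zero (Nat.cast_ne_zero.2 hp) (pow_ne_zero _ hzz₀)) hz

theorem exists_ne_isRoot_sub_C_of_sq_dvd {p : K[X]} (hp : p ≠ 0) {z : K}
    (hz : (X - C z) ^ 2 ∣ p) {c : K} (hc : c ≠ 0) :
    ∃ z₁ z₂, z₁ ≠ z₂ ∧ (p - C c).IsRoot z₁ ∧ (p - C c).IsRoot z₂ := by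
  have hroot : p.IsRoot z := dvd_iff_isRoot.1 ((dvd_pow_self _ two_ne_zero).trans hz)
  refine exists_ne_isRoot_sub_C_of_isRoot_derivative ?_ ?_ (by rw [hroot.eq_zero]; exact hc.symm)
  · exact (natDegree_pos_iff_degree_pos.2 (degree_pos_of_root hp hroot)).ne'
  · have hdvd : X - C z ∣ derivative p := by
      simpa using pow_sub_one_dvd_derivative_of_pow_dvd hz
    exact dvd_iff_isRoot.1 hdvd

end Polynomial

theorem stmt2_general (n k : ℕ) (hn : 1 ≤ n) (hk : 2 ≤ k) (ν : ℕ → ℕ)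
    (f : ℂ[X]) (hf : 1 ≤ f.natDegree)
    (hmult : ∀ z : ℂ, f.IsRoot z → k ≤ f.rootMultiplicity z)
    (c : ℂ) (hc : c ≠ 0) :
    ∃ z₁ z₂ : ℂ, z₁ ≠ z₂ ∧
      (f ^ n * ∏ j ∈ Finset.Icc 1 k, (derivative^[j] f) ^ (ν j) - C c).IsRoot z₁ ∧
      (f ^ n * ∏ j ∈ Finset.Icc 1 k, (derivative^[j] f) ^ (ν j) - C c).IsRoot z₂ := by
  have hf0 : f ≠ 0 := ne_zero_of_natDegree_gt hf
  obtain ⟨z, hz⟩ := Complex.exists_root (natDegree_pos_iff_degree_pos.1 hf)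
  have hzk : (X - C z) ^ k ∣ f := (pow_dvd_pow _ (hmult z hz)).trans (pow_rootMultiplicity_dvd f z)
  have hkf : k ≤ f.natDegree := by simpa using natDegree_le_of_dvd hzk hf0
  refine exists_ne_isRoot_sub_C_of_sq_dvd (z := z) ?_ ?_ hc
  · refine mul_ne_zero (pow_ne_zero n hf0) (Finset.prod_ne_zero_iff.2 fun j hj => ?_)
    exact pow_ne_zero _ (iterate_derivative_ne_zero hf0 ((Finset.mem_Icc.1 hj).2.trans hkf))
  · exact ((pow_dvd_pow _ hk).trans hzk).trans ((dvd_pow_self f (by omega)).mul_right _)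

theorem stmt2 (n k : ℕ) (hn : 1 ≤ n) (hk : 2 ≤ k) (ν : ℕ → ℕ) (hνk : 1 ≤ ν k)
    (f : ℂ[X]) (hf : 1 ≤ f.natDegree)
    (hmult : ∀ z : ℂ, f.IsRoot z → k ≤ f.rootMultiplicity z)
    (c : ℂ) (hc : c ≠ 0) :
    ∃ z₁ z₂ : ℂ, z₁ ≠ z₂ ∧
      (f ^ n * ∏ j ∈ Finset.Icc 1 k, (derivative^[j] f) ^ (ν j) - C c).IsRoot z₁ ∧
      (f ^ n * ∏ j ∈ Finset.Icc 1 k, (derivative^[j] f) ^ (ν j) - C c).IsRoot z₂ :=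
  stmt2_general n k hn hk ν f hf hmult c hc
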